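/- Let H be a real Hilbert space and let M : [0, +∞) → ℝ be a continuous function satisfying (C_M¹) inf_{t ≥ 0} M(t) > 0 and (C_M²): there exists a continuous function v_M : [0, +∞) → ℝ with v_M(t·M(t²)) = t for every t ≥ 0. Define T : H → H by T(v) := (v_M(‖v‖)/‖v‖)·v for v ≠ 0 and T(0) := 0. Then T is continuous on H and T(M(‖u‖²)·u) = u for every u ∈ H; i.e., T is a continuous left inverse of the map u ↦ M(‖u‖²)·u. -/
import Mathlib


open Set

/-- Let `M : [0,∞) → ℝ` be continuous with `inf_{t≥0} M(t) > 0` `(C_M¹)` and let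
`v_M : [0,∞) → ℝ` be continuous with `v_M(t·M(t²)) = t` for all `t ≥ 0` `(C_M²)`.
Then the map `T : H → H`, `T(v) = (v_M(‖v‖)/‖v‖)·v` for `v ≠ 0` and `T(0) = 0`,
is continuous and satisfies `T(M(‖u‖²)·u) = u` for every `u`, i.e. it is a
continuous left inverse of `u ↦ M(‖u‖²)·u`. -/
theorem continuous_inverse_of_kirchhoff_map
    (H : Type*) [NormedAddCommGroup H] [InnerProductSpace ℝ H]
    (M : ℝ → ℝ) (hMcont : ContinuousOn M (Set.Ici 0))
    (hMinf : 0 < sInf (M '' Set.Ici 0))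
    (vM : ℝ → ℝ) (hvMcont : ContinuousOn vM (Set.Ici 0))
    (hvM : ∀ t : ℝ, 0 ≤ t → vM (t * M (t ^ 2)) = t)
    (T : H → H) (hT0 : T 0 = 0)
    (hT : ∀ v : H, v ≠ 0 → T v = (vM ‖v‖ / ‖v‖) • v) :
    Continuous T ∧ ∀ u : H, T (M (‖u‖ ^ 2) • u) = u := by
  -- M is bounded below by a positive constant
  have hbdd : BddBelow (M '' Set.Ici 0) := by
    by_contra h
    rw [Real.sInf_of_not_bddBelow h] at hMinf
    exact lt_irrefl 0 hMinf
  have hMpos : ∀ t : ℝ, 0 ≤ t → 0 < M t := fun t ht =>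
    lt_of_lt_of_le hMinf (csInf_le hbdd ⟨t, ht, rfl⟩)
  have hvM0 : vM 0 = 0 := by
    have := hvM 0 le_rfl
    simpa using this
  -- the composite vM ∘ norm is continuous everywhere
  have hcomp : Continuous fun v : H => vM ‖v‖ :=
    hvMcont.comp_continuous continuous_norm fun v => norm_nonneg v
  constructor
  · rw [continuous_iff_continuousAt]
    intro x
    by_cases hx : x = 0
    · subst hx
      rw [ContinuousAt, hT0]
      apply squeeze_zero_norm (f := T) (a := fun v : H => |vM ‖v‖|)
      · intro v
        by_cases hv : v = 0
        · simp [hv, hT0]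
        · rw [hT v hv, norm_smul]
          have hv' : (0:ℝ) < ‖v‖ := norm_pos_iff.mpr hv
          rw [Real.norm_eq_abs, abs_div, abs_of_pos hv']
          rw [div_mul_cancel₀]
          exact ne_of_gt hv'
      · have : Filter.Tendsto (fun v : H => |vM ‖v‖|) (nhds 0) (nhds (|vM ‖(0:H)‖|)) :=
          (hcomp.abs.tendsto 0)
        simpa [hvM0] using this
    · have hmem : {v : H | v ≠ 0} ∈ nhds x :=
        isOpen_compl_singleton.mem_nhds hx
      have heq : ∀ᶠ v in nhds x, T v = (vM ‖v‖ / ‖v‖) • v := by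
        filter_upwards [hmem] with v hv using hT v hv
      have hcont : ContinuousAt (fun v : H => (vM ‖v‖ / ‖v‖) • v) x := by
        apply ContinuousAt.smul _ continuousAt_id
        exact (hcomp.continuousAt).div continuous_norm.continuousAt
          (norm_ne_zero_iff.mpr hx)
      exact hcont.congr (Filter.EventuallyEq.symm heq)
  · intro u
    by_cases hu : u = 0
    · simp [hu, hT0]
    · have hMu : 0 < M (‖u‖ ^ 2) := hMpos _ (sq_nonneg _)
      have hun : (0:ℝ) < ‖u‖ := norm_pos_iff.mpr hu
      have hv : M (‖u‖ ^ 2) • u ≠ 0 :=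
        smul_ne_zero (ne_of_gt hMu) hu
      rw [hT _ hv]
      have hnorm : ‖M (‖u‖ ^ 2) • u‖ = ‖u‖ * M (‖u‖ ^ 2) := by
        rw [norm_smul, Real.norm_eq_abs, abs_of_pos hMu, mul_comm]
      rw [hnorm, hvM ‖u‖ (norm_nonneg u), smul_smul]
      rw [div_mul_eq_mul_div, div_self (by positivity), one_smul]
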